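/- arXiv:1206.1193 — 2 statements merged into one kernel-verified Lean document; each statement's English description precedes it below -/
import Mathlib

section
/- Let h : J ⊂ ℝ → ℝ be a non-negative supermultiplicative function with h(α) ≥ α for all α ∈ (0,1), and let f : I ⊂ [0,∞) → ℝ be differentiable on the interior of I with h², f′ ∈ L[a,b], where a, b are interior points of I with a < b. If |f′| is h-convex on I, then |(1/(b−a)) ∫_a^b f(x) dx − (1/3)[(f(a)+f(b))/2 + 2 f((a+b)/2)]| ≤ ((b−a)/(3√2)) · { |f′(a)| [ (∫_0^{1/2} h(t²) dt)^{1/2} + (∫_{1/2}^1 h(t²) dt)^{1/2} ] + |f′(b)| [ (∫_0^{1/2} h((1−t)²) dt)^{1/2} + (∫_{1/2}^1 h((1−t)²) dt)^{1/2} ] }. -/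
/-!
Substituting `x = t a + (1 - t) b` and integrating by parts against the kernel `k(t) = t - 1/6` on
`[0, 1/2]`, `k(t) = t - 5/6` on `[1/2, 1]` writes the Simpson error as
`(b - a) ∫ k(t) f'(t a + (1 - t) b) dt`. By `h`-convexity the integrand is at most
`|k(t)| (h(t) |f'(a)| + h(1 - t) |f'(b)|)`. Cauchy–Schwarz on each half, with `∫ k² = 1/72` there
and `h(t)² ≤ h(t²)` by supermultiplicativity, gives the bound with the constant
`1/(6√2) ≤ 1/(3√2)`.
-/

open MeasureTheory Set

theorem integral_abs_mul_abs_le_sqrt_mul_sqrt {α : Type*} [MeasurableSpace α] {μ : Measure α}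
    {u v : α → ℝ} (hu : MemLp u 2 μ) (hv : MemLp v 2 μ) :
    ∫ x, |u x| * |v x| ∂μ ≤ √(∫ x, u x ^ 2 ∂μ) * √(∫ x, v x ^ 2 ∂μ) := by
  have h2 : ENNReal.ofReal 2 = 2 := by norm_num
  have key := integral_mul_norm_le_Lp_mul_Lq Real.HolderConjugate.two_two (h2 ▸ hu) (h2 ▸ hv)
  have hsq : ∀ w : α → ℝ, ∫ x, ‖w x‖ ^ (2:ℝ) ∂μ = ∫ x, w x ^ 2 ∂μ := fun w => by
    simp only [Real.rpow_two, Real.norm_eq_abs, sq_abs]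
  rw [hsq, hsq, ← Real.sqrt_eq_rpow, ← Real.sqrt_eq_rpow] at key
  simpa only [Real.norm_eq_abs] using key

theorem integral_abs_mul_le_of_abs_le_add {α : Type*} [MeasurableSpace α] {μ : Measure α}
    {k g u v : α → ℝ} (hk : MemLp k 2 μ) (hu : MemLp u 2 μ) (hv : MemLp v 2 μ)
    (hg : AEStronglyMeasurable g μ) (hguv : ∀ᵐ x ∂μ, |g x| ≤ |u x| + |v x|) :
    ∫ x, |k x| * |g x| ∂μ ≤
      √(∫ x, k x ^ 2 ∂μ) * (√(∫ x, u x ^ 2 ∂μ) + √(∫ x, v x ^ 2 ∂μ)) := by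
  have hku : Integrable (fun x => |k x| * |u x|) μ := hk.abs.integrable_mul hu.abs
  have hkv : Integrable (fun x => |k x| * |v x|) μ := hk.abs.integrable_mul hv.abs
  have hle : ∀ᵐ x ∂μ, |k x| * |g x| ≤ |k x| * |u x| + |k x| * |v x| := by
    filter_upwards [hguv] with x hx
    rw [← mul_add]
    exact mul_le_mul_of_nonneg_left hx (abs_nonneg _)
  have hkg : Integrable (fun x => |k x| * |g x|) μ := by
    refine (hku.add hkv).mono' (hk.1.norm.mul hg.norm) ?_
    filter_upwards [hle] with x hx
    rwa [Real.norm_eq_abs, abs_of_nonneg (by positivity)]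
  calc ∫ x, |k x| * |g x| ∂μ ≤ ∫ x, (|k x| * |u x| + |k x| * |v x|) ∂μ :=
        integral_mono_ae hkg (hku.add hkv) hle
    _ = (∫ x, |k x| * |u x| ∂μ) + ∫ x, |k x| * |v x| ∂μ := integral_add hku hkv
    _ ≤ _ := by
        rw [mul_add]
        exact add_le_add (integral_abs_mul_abs_le_sqrt_mul_sqrt hk hu)
          (integral_abs_mul_abs_le_sqrt_mul_sqrt hk hv)

theorem integral_sub_const_mul_deriv {g g' : ℝ → ℝ} {p q : ℝ} (c : ℝ)
    (hg : ∀ t ∈ uIcc p q, HasDerivAt g (g' t) t) (hg' : IntervalIntegrable g' volume p q) :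
    ∫ t in p..q, (t - c) * g' t = (q - c) * g q - (p - c) * g p - ∫ t in p..q, g t := by
  simpa using intervalIntegral.integral_mul_deriv_eq_deriv_mul (u := fun t => t - c)
    (u' := fun _ => 1) (fun t _ => (hasDerivAt_id t).sub_const c) hg intervalIntegrable_const hg'

theorem simpson_error_unit_eq {g g' : ℝ → ℝ} (hg : ∀ t ∈ Icc (0:ℝ) 1, HasDerivAt g (g' t) t)
    (hg' : IntervalIntegrable g' volume 0 1) :
    (∫ t in (0:ℝ)..1, g t) - (1/3) * ((g 0 + g 1)/2 + 2 * g (1/2))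
      = -((∫ t in (0:ℝ)..1/2, (t - 1/6) * g' t) + ∫ t in (1/2:ℝ)..1, (t - 5/6) * g' t) := by
  have hleft : uIcc (0:ℝ) (1/2) ⊆ uIcc 0 1 := uIcc_subset_uIcc_left (by norm_num)
  have hright : uIcc (1/2:ℝ) 1 ⊆ uIcc 0 1 := uIcc_subset_uIcc_right (by norm_num)
  have hg01 : ∀ t ∈ uIcc (0:ℝ) 1, HasDerivAt g (g' t) t := uIcc_of_le (zero_le_one' ℝ) ▸ hg
  have hcont : ContinuousOn g (uIcc 0 1) :=
    fun t ht => (hg01 t ht).continuousAt.continuousWithinAt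
  rw [integral_sub_const_mul_deriv _ (fun t ht => hg01 t (hleft ht)) (hg'.mono_set hleft),
    integral_sub_const_mul_deriv _ (fun t ht => hg01 t (hright ht)) (hg'.mono_set hright),
    ← intervalIntegral.integral_add_adjacent_intervals
      ((hcont.mono hleft).intervalIntegrable (μ := volume))
      ((hcont.mono hright).intervalIntegrable (μ := volume))]
  ring

theorem IntervalIntegrable.comp_convexCombination_zero_one {f : ℝ → ℝ} {a b : ℝ} (hab : a ≠ b)
    (hf : IntervalIntegrable f volume a b) :
    IntervalIntegrable (fun t => f (t*a + (1-t)*b)) volume 0 1 := by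
  have := (hf.comp_add_right b).comp_mul_left (c := a - b)
  rw [sub_self, zero_div, div_self (sub_ne_zero.2 hab)] at this
  convert this.symm using 2 with t
  congr 1
  ring

theorem simpson_error_eq {f f' : ℝ → ℝ} {a b : ℝ} (hab : a ≠ b)
    (hf : ∀ x ∈ uIcc a b, HasDerivAt f (f' x) x) (hf' : IntervalIntegrable f' volume a b) :
    (1/(b-a)) * (∫ x in a..b, f x) - (1/3) * ((f a + f b)/2 + 2 * f ((a+b)/2))
      = (b - a) * ((∫ t in (0:ℝ)..1/2, (t - 1/6) * f' (t*a + (1-t)*b))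
          + ∫ t in (1/2:ℝ)..1, (t - 5/6) * f' (t*a + (1-t)*b)) := by
  have hab' : a - b ≠ 0 := sub_ne_zero.2 hab
  have hmem : ∀ t ∈ Icc (0:ℝ) 1, t*a + (1-t)*b ∈ uIcc a b := fun t ht => by
    rw [← segment_eq_uIcc]
    exact ⟨t, 1 - t, ht.1, sub_nonneg.2 ht.2, by ring, by simp only [smul_eq_mul]⟩
  have hderiv : ∀ t ∈ Icc (0:ℝ) 1,
      HasDerivAt (fun s => f (s*a + (1-s)*b)) (f' (t*a + (1-t)*b) * (a - b)) t := by
    intro t ht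
    have hline : HasDerivAt (fun s : ℝ => s*a + (1-s)*b) (a - b) t := by
      rw [show (fun s : ℝ => s*a + (1-s)*b) = fun s => s * (a - b) + b by ext s; ring]
      simpa using ((hasDerivAt_id t).mul_const (a - b)).add_const b
    exact (hf _ (hmem t ht)).comp t hline
  have hint := hf'.comp_convexCombination_zero_one hab
  have hsubst : ∫ t in (0:ℝ)..1, f (t*a + (1-t)*b) = (1/(b-a)) * ∫ x in a..b, f x := by
    have := intervalIntegral.integral_comp_mul_add f hab' b (a := 0) (b := 1)
    simp only [mul_zero, zero_add, mul_one, sub_add_cancel, smul_eq_mul] at this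
    rw [show (fun t => f (t*a + (1-t)*b)) = fun t => f ((a-b)*t + b) by ext t; congr 1; ring,
      this, intervalIntegral.integral_symm a b]
    field_simp
    ring
  have := simpson_error_unit_eq hderiv (hint.mul_const (a - b))
  rw [hsubst, show 0*a + (1-0)*b = b by ring, show 1*a + (1-1)*b = a by ring,
    show 1/2*a + (1-1/2)*b = (a+b)/2 by ring] at this
  simp only [← mul_assoc, intervalIntegral.integral_mul_const] at this
  linear_combination this

-- The theorem's left-hand side has this shape: the binder of `∫` extends over `- c`.
theorem one_div_sub_mul_integral_sub_const {f : ℝ → ℝ} {a b : ℝ} (hab : a ≠ b)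
    (hf : IntervalIntegrable f volume a b) (c : ℝ) :
    (1/(b-a)) * ∫ x in a..b, (f x - c) = (1/(b-a)) * (∫ x in a..b, f x) - c := by
  have : b - a ≠ 0 := sub_ne_zero.2 hab.symm
  rw [intervalIntegral.integral_sub hf intervalIntegrable_const, intervalIntegral.integral_const,
    smul_eq_mul]
  field_simp

theorem memLp_two_of_nonneg_of_integrable_sq {α : Type*} [MeasurableSpace α] {μ : Measure α}
    {u : α → ℝ} (hu : 0 ≤ᵐ[μ] u) (hu2 : Integrable (fun x => u x ^ 2) μ) : MemLp u 2 μ := by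
  refine (memLp_two_iff_integrable_sq ?_).2 hu2
  refine (Real.continuous_sqrt.comp_aestronglyMeasurable hu2.1).congr ?_
  filter_upwards [hu] with x hx
  exact Real.sqrt_sq hx

theorem sqrt_integral_sq_mul_le_of_supermul {α : Type*} [MeasurableSpace α] {μ : Measure α}
    {h : ℝ → ℝ} {w : α → ℝ} {A : ℝ} (hA : 0 ≤ A)
    (hsm : ∀ x ∈ Icc (0:ℝ) 1, ∀ y ∈ Icc (0:ℝ) 1, h x * h y ≤ h (x * y))
    (hw : ∀ᵐ t ∂μ, w t ∈ Icc (0:ℝ) 1)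
    (h2 : Integrable (fun t => h (w t) ^ 2) μ) (h2' : Integrable (fun t => h (w t ^ 2)) μ) :
    √(∫ t, (h (w t) * A) ^ 2 ∂μ) ≤ A * √(∫ t, h (w t ^ 2) ∂μ) := by
  have hmono : ∫ t, h (w t) ^ 2 ∂μ ≤ ∫ t, h (w t ^ 2) ∂μ := by
    refine integral_mono_ae h2 h2' ?_
    filter_upwards [hw] with t ht
    simpa only [sq] using hsm _ ht _ ht
  simp_rw [mul_pow, integral_mul_const]
  rw [Real.sqrt_mul' _ (sq_nonneg A), Real.sqrt_sq hA, mul_comm]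
  exact mul_le_mul_of_nonneg_left (Real.sqrt_le_sqrt hmono) hA

theorem abs_intervalIntegral_mul_le_of_abs_le_hconvex {h G k : ℝ → ℝ} {A B p q : ℝ}
    (hA : 0 ≤ A) (hB : 0 ≤ B) (hp : 0 ≤ p) (hpq : p ≤ q) (hq : q ≤ 1)
    (hh0 : ∀ t ∈ Icc (0:ℝ) 1, 0 ≤ h t)
    (hsm : ∀ x ∈ Icc (0:ℝ) 1, ∀ y ∈ Icc (0:ℝ) 1, h x * h y ≤ h (x * y))
    (hk : Continuous k) (hG : IntervalIntegrable G volume 0 1)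
    (hh2 : IntervalIntegrable (fun t => h t ^ 2) volume 0 1)
    (hhsq : IntervalIntegrable (fun t => h (t ^ 2)) volume 0 1)
    (hhsq' : IntervalIntegrable (fun t => h ((1 - t) ^ 2)) volume 0 1)
    (hGh : ∀ t ∈ Ioo (0:ℝ) 1, |G t| ≤ h t * A + h (1 - t) * B) :
    |∫ t in p..q, k t * G t| ≤ √(∫ t in p..q, k t ^ 2) *
      (A * √(∫ t in p..q, h (t ^ 2)) + B * √(∫ t in p..q, h ((1 - t) ^ 2))) := by
  set μ := volume.restrict (Ioo p q)
  have hsub : uIcc p q ⊆ uIcc 0 1 := by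
    rw [uIcc_of_le hpq, uIcc_of_le zero_le_one]
    exact Icc_subset_Icc hp hq
  have hon : ∀ {F : ℝ → ℝ}, IntervalIntegrable F volume 0 1 → Integrable F μ := fun hF =>
    (intervalIntegrable_iff_integrableOn_Ioo_of_le hpq).1 (hF.mono_set hsub)
  have hint : ∀ F : ℝ → ℝ, ∫ t in p..q, F t = ∫ t, F t ∂μ := fun F => by
    rw [intervalIntegral.integral_of_le hpq, integral_Ioc_eq_integral_Ioo]
  have hmem : ∀ᵐ t ∂μ, t ∈ Ioo (0:ℝ) 1 := by
    filter_upwards [ae_restrict_mem measurableSet_Ioo] with t ht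
    exact ⟨hp.trans_lt ht.1, ht.2.trans_le hq⟩
  have hmem' : ∀ᵐ t ∂μ, t ∈ Icc (0:ℝ) 1 := by
    filter_upwards [hmem] with t ht using Ioo_subset_Icc_self ht
  have hmem'' : ∀ᵐ t ∂μ, 1 - t ∈ Icc (0:ℝ) 1 := by
    filter_upwards [hmem'] with t ht using ⟨sub_nonneg.2 ht.2, by linarith [ht.1]⟩
  have hh2' : IntervalIntegrable (fun t => h (1 - t) ^ 2) volume 0 1 := by
    simpa using (hh2.comp_sub_left 1).symm
  have hu : MemLp (fun t => h t * A) 2 μ := by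
    refine memLp_two_of_nonneg_of_integrable_sq ?_ ?_
    · filter_upwards [hmem'] with t ht using mul_nonneg (hh0 t ht) hA
    · simpa only [mul_pow] using (hon hh2).mul_const (A ^ 2)
  have hv : MemLp (fun t => h (1 - t) * B) 2 μ := by
    refine memLp_two_of_nonneg_of_integrable_sq ?_ ?_
    · filter_upwards [hmem''] with t ht using mul_nonneg (hh0 _ ht) hB
    · simpa only [mul_pow] using (hon hh2').mul_const (B ^ 2)
  have hkμ : MemLp k 2 μ :=
    (memLp_two_iff_integrable_sq hk.aestronglyMeasurable).2
      (hon ((hk.pow 2).intervalIntegrable 0 1))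
  have hcs := integral_abs_mul_le_of_abs_le_add hkμ hu hv (hon hG).1 (by
    filter_upwards [hmem] with t ht
    rw [abs_of_nonneg (mul_nonneg (hh0 t (Ioo_subset_Icc_self ht)) hA),
      abs_of_nonneg (mul_nonneg (hh0 (1 - t) ⟨by linarith [ht.2], by linarith [ht.1]⟩) hB)]
    exact hGh t ht)
  rw [hint, hint, hint, hint]
  calc |∫ t, k t * G t ∂μ| ≤ ∫ t, |k t| * |G t| ∂μ := by
        simpa only [abs_mul] using abs_integral_le_integral_abs (f := fun t => k t * G t)
    _ ≤ _ := hcs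
    _ ≤ _ := by
        gcongr
        · exact sqrt_integral_sq_mul_le_of_supermul (w := id) hA hsm hmem'
            (hon hh2) (hon hhsq)
        · exact sqrt_integral_sq_mul_le_of_supermul (w := fun t => 1 - t) hB hsm hmem''
            (hon hh2') (hon hhsq')

theorem integral_sub_one_sixth_sq : ∫ t in (0:ℝ)..1/2, (t - 1/6) ^ 2 = 1/72 := by
  rw [intervalIntegral.integral_comp_sub_right (fun x => x ^ 2), integral_pow]
  norm_num

theorem integral_sub_five_sixths_sq : ∫ t in (1/2:ℝ)..1, (t - 5/6) ^ 2 = 1/72 := by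
  rw [intervalIntegral.integral_comp_sub_right (fun x => x ^ 2), integral_pow]
  norm_num

theorem simpson_hconvex_supermultiplicative_sq_general
    (I : Set ℝ) (hIc : I.OrdConnected)
    (h f f' : ℝ → ℝ) (a b : ℝ)
    (ha : a ∈ interior I) (hb : b ∈ interior I) (hab : a < b)
    (hh0 : ∀ t ∈ Set.Icc (0:ℝ) 1, 0 ≤ h t)
    (hsm : ∀ x ∈ Set.Icc (0:ℝ) 1, ∀ y ∈ Set.Icc (0:ℝ) 1, h x * h y ≤ h (x*y))
    (hderiv : ∀ x ∈ interior I, HasDerivAt f (f' x) x)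
    (hfint : IntervalIntegrable f' volume a b)
    (hhint : IntervalIntegrable (fun t => (h t)^2) volume 0 1)
    (hhint' : IntervalIntegrable (fun t => h (t^2)) volume 0 1)
    (hhint'' : IntervalIntegrable (fun t => h ((1-t)^2)) volume 0 1)
    (hconv : ∀ x ∈ I, ∀ y ∈ I, ∀ t ∈ Set.Ioo (0:ℝ) 1,
      |f' (t*x + (1-t)*y)| ≤ h t * |f' x| + h (1-t) * |f' y|) :
    |(1/(b-a)) * ∫ x in a..b, f x
        - (1/3) * ((f a + f b)/2 + 2 * f ((a+b)/2))|
      ≤ ((b-a)/(3 * Real.sqrt 2)) *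
        (|f' a| * (Real.sqrt (∫ t in (0:ℝ)..(1/2), h (t^2))
                    + Real.sqrt (∫ t in (1/2:ℝ)..1, h (t^2)))
          + |f' b| * (Real.sqrt (∫ t in (0:ℝ)..(1/2), h ((1-t)^2))
                    + Real.sqrt (∫ t in (1/2:ℝ)..1, h ((1-t)^2)))) := by
  have hf : ∀ x ∈ uIcc a b, HasDerivAt f (f' x) x := fun x hx =>
    hderiv x (hIc.interior.out ha hb (uIcc_of_le hab.le ▸ hx))
  have hfi : IntervalIntegrable f volume a b :=
    ContinuousOn.intervalIntegrable fun x hx => (hf x hx).continuousAt.continuousWithinAt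
  have hGh : ∀ t ∈ Ioo (0:ℝ) 1, |f' (t*a + (1-t)*b)| ≤ h t * |f' a| + h (1-t) * |f' b| :=
    hconv a (interior_subset ha) b (interior_subset hb)
  have hG := hfint.comp_convexCombination_zero_one hab.ne
  have hleft := abs_intervalIntegral_mul_le_of_abs_le_hconvex (p := 0) (q := 1/2)
    (abs_nonneg _) (abs_nonneg _) le_rfl (by norm_num) (by norm_num) hh0 hsm
    (continuous_sub_right (1/6)) hG hhint hhint' hhint'' hGh
  have hright := abs_intervalIntegral_mul_le_of_abs_le_hconvex (p := 1/2) (q := 1)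
    (abs_nonneg _) (abs_nonneg _) (by norm_num) (by norm_num) le_rfl hh0 hsm
    (continuous_sub_right (5/6)) hG hhint hhint' hhint'' hGh
  rw [integral_sub_one_sixth_sq] at hleft
  rw [integral_sub_five_sixths_sq] at hright
  have hconst : √(1/72 : ℝ) ≤ 1 / (3 * √2) := by
    rw [show 1 / (3 * √2) = √(1/18 : ℝ) by
      rw [eq_comm, Real.sqrt_eq_iff_mul_self_eq_of_pos (by positivity)]; field_simp; norm_num]
    exact Real.sqrt_le_sqrt (by norm_num)
  rw [one_div_sub_mul_integral_sub_const hab.ne hfi, simpson_error_eq hab.ne hf hfint, abs_mul,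
    abs_of_pos (sub_pos.2 hab), ← mul_one_div (b - a), mul_assoc]
  gcongr
  refine (abs_add_le _ _).trans ((add_le_add hleft hright).trans ?_)
  rw [← mul_add]
  calc _ ≤ 1 / (3 * √2) * _ := by gcongr
    _ = _ := by ring

/-- Simpson-type inequality (case `p = q = 2`) for functions whose derivative has
`h`-convex absolute value, for a supermultiplicative `h`. -/
theorem simpson_hconvex_supermultiplicative_sq
    (I : Set ℝ) (hI : I ⊆ Set.Ici (0:ℝ)) (hIc : I.OrdConnected)
    (h f f' : ℝ → ℝ) (a b : ℝ)
    (ha : a ∈ interior I) (hb : b ∈ interior I) (hab : a < b)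
    (hh0 : ∀ t ∈ Set.Icc (0:ℝ) 1, 0 ≤ h t)
    (hha : ∀ t ∈ Set.Ioo (0:ℝ) 1, t ≤ h t)
    (hsm : ∀ x ∈ Set.Icc (0:ℝ) 1, ∀ y ∈ Set.Icc (0:ℝ) 1, h x * h y ≤ h (x*y))
    (hderiv : ∀ x ∈ interior I, HasDerivAt f (f' x) x)
    (hfint : IntervalIntegrable f' volume a b)
    (hhint : IntervalIntegrable (fun t => (h t)^2) volume 0 1)
    (hhint' : IntervalIntegrable (fun t => h (t^2)) volume 0 1)
    (hhint'' : IntervalIntegrable (fun t => h ((1-t)^2)) volume 0 1)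
    (hconv : ∀ x ∈ I, ∀ y ∈ I, ∀ t ∈ Set.Ioo (0:ℝ) 1,
      |f' (t*x + (1-t)*y)| ≤ h t * |f' x| + h (1-t) * |f' y|) :
    |(1/(b-a)) * ∫ x in a..b, f x
        - (1/3) * ((f a + f b)/2 + 2 * f ((a+b)/2))|
      ≤ ((b-a)/(3 * Real.sqrt 2)) *
        (|f' a| * (Real.sqrt (∫ t in (0:ℝ)..(1/2), h (t^2))
                    + Real.sqrt (∫ t in (1/2:ℝ)..1, h (t^2)))
          + |f' b| * (Real.sqrt (∫ t in (0:ℝ)..(1/2), h ((1-t)^2))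
                    + Real.sqrt (∫ t in (1/2:ℝ)..1, h ((1-t)^2)))) :=
  simpson_hconvex_supermultiplicative_sq_general I hIc h f f' a b ha hb hab hh0 hsm hderiv hfint
    hhint hhint' hhint'' hconv
end

section
/- Let f : I ⊂ [0,∞) → ℝ be differentiable on the interior of I with f′ ∈ L[a,b], where a, b are interior points of I with a < b, and let p, q > 1 with 1/p + 1/q = 1. If |f′| is concave on I, then |(1/(b−a)) ∫_a^b f(x) dx − (1/3)[(f(a)+f(b))/2 + 2 f((a+b)/2)]| ≤ ((b−a)/6) ((1 + 2^{p+1})/(p+1))^{1/p} |f′((a+b)/2)|. -/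
/-!
Integrating by parts against the Peano kernel of Simpson's rule writes the error as
`∫ₐᵇ k f'`, where `k` takes opposite values at `y` and `a + b - y`. Pairing these points and
applying concavity of `|f'|` with `t = 1/2` bounds the error by
`2 |f' ((a+b)/2)| ∫ₐ^{(a+b)/2} |k| = 5 (b - a)² / 36 · |f' ((a+b)/2)|`. By Bernoulli's
inequality `((1 + 2^(p+1)) / (p+1))^(1/p) ≥ 1 > 5/6`, which gives the claimed bound.
-/

open MeasureTheory Set intervalIntegral

theorem integral_sub_const_mul_deriv_s9 {f f' : ℝ → ℝ} {u v : ℝ} (c : ℝ) (huv : u ≤ v)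
    (hderiv : ∀ x ∈ Icc u v, HasDerivAt f (f' x) x) (hint : IntervalIntegrable f' volume u v) :
    ∫ x in u..v, (x - c) * f' x = (v - c) * f v - (u - c) * f u - ∫ x in u..v, f x := by
  have hderiv' : ∀ x ∈ uIcc u v, HasDerivAt f (f' x) x := by
    rw [uIcc_of_le huv]; exact hderiv
  simpa using integral_mul_deriv_eq_deriv_mul (fun x _ ↦ (hasDerivAt_id x).sub_const c)
    hderiv' intervalIntegrable_const hint

theorem integral_abs_sub_of_mem_Icc {u v c : ℝ} (hc : c ∈ Icc u v) :
    ∫ y in u..v, |y - c| = ((c - u) ^ 2 + (v - c) ^ 2) / 2 := by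
  have hcont : Continuous fun y : ℝ ↦ |y - c| := by fun_prop
  have hleft : ∫ y in u..c, |y - c| = ∫ y in u..c, (c - y) :=
    integral_congr fun y hy ↦ by
      rw [uIcc_of_le hc.1] at hy
      simp only [abs_of_nonpos (sub_nonpos.2 hy.2), neg_sub]
  have hright : ∫ y in c..v, |y - c| = ∫ y in c..v, (y - c) :=
    integral_congr fun y hy ↦ by
      rw [uIcc_of_le hc.2] at hy
      simp only [abs_of_nonneg (sub_nonneg.2 hy.1)]
  rw [← integral_add_adjacent_intervals (hcont.intervalIntegrable u c)
    (hcont.intervalIntegrable c v), hleft, hright,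
    integral_sub intervalIntegrable_const intervalIntegrable_id,
    integral_sub intervalIntegrable_id intervalIntegrable_const]
  simp only [integral_id, intervalIntegral.integral_const, smul_eq_mul]
  ring

/-- `g` integrated against the first Peano kernel of Simpson's rule on `[a, b]`. -/
noncomputable def simpsonKernelIntegral (g : ℝ → ℝ) (a b : ℝ) : ℝ :=
  (∫ x in a..(a + b) / 2, (x - (5 * a + b) / 6) * g x) +
    ∫ x in (a + b) / 2..b, (x - (a + 5 * b) / 6) * g x

theorem simpsonKernelIntegral_deriv_eq {f f' : ℝ → ℝ} {a b : ℝ} (hab : a ≤ b)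
    (hderiv : ∀ x ∈ Icc a b, HasDerivAt f (f' x) x) (hint : IntervalIntegrable f' volume a b) :
    simpsonKernelIntegral f' a b =
      (b - a) * ((1 / 3) * ((f a + f b) / 2 + 2 * f ((a + b) / 2))) - ∫ x in a..b, f x := by
  have ham : a ≤ (a + b) / 2 := by linarith
  have hmb : (a + b) / 2 ≤ b := by linarith
  have hm : (a + b) / 2 ∈ uIcc a b := by rw [uIcc_of_le hab]; exact ⟨ham, hmb⟩
  have hleft : uIcc a ((a + b) / 2) ⊆ uIcc a b := uIcc_subset_uIcc left_mem_uIcc hm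
  have hright : uIcc ((a + b) / 2) b ⊆ uIcc a b := uIcc_subset_uIcc hm right_mem_uIcc
  have hf : IntervalIntegrable f volume a b :=
    (HasDerivAt.continuousOn hderiv).intervalIntegrable_of_Icc hab
  rw [simpsonKernelIntegral,
    integral_sub_const_mul_deriv_s9 _ ham (fun x hx ↦ hderiv x ⟨hx.1, hx.2.trans hmb⟩)
      (hint.mono_set hleft),
    integral_sub_const_mul_deriv_s9 _ hmb (fun x hx ↦ hderiv x ⟨ham.trans hx.1, hx.2⟩)
      (hint.mono_set hright),
    ← integral_add_adjacent_intervals (hf.mono_set hleft) (hf.mono_set hright)]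
  ring

theorem abs_simpsonKernelIntegral_le {g : ℝ → ℝ} {a b M : ℝ} (hab : a ≤ b)
    (hg : IntervalIntegrable g volume a b)
    (hpair : ∀ y ∈ Icc a ((a + b) / 2), |g y| + |g (a + b - y)| ≤ 2 * M) :
    |simpsonKernelIntegral g a b| ≤ 5 * (b - a) ^ 2 / 36 * M := by
  have ham : a ≤ (a + b) / 2 := by linarith
  have hmb : (a + b) / 2 ≤ b := by linarith
  have hm : (a + b) / 2 ∈ uIcc a b := by rw [uIcc_of_le hab]; exact ⟨ham, hmb⟩
  have hleft : uIcc a ((a + b) / 2) ⊆ uIcc a b := uIcc_subset_uIcc left_mem_uIcc hm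
  have hright : uIcc ((a + b) / 2) b ⊆ uIcc a b := uIcc_subset_uIcc hm right_mem_uIcc
  have hreflect := integral_comp_sub_left (fun x ↦ |(x - (a + 5 * b) / 6) * g x|) (a + b)
    (a := a) (b := (a + b) / 2)
  have hg_reflect : IntervalIntegrable (fun y ↦ g (a + b - y)) volume a ((a + b) / 2) := by
    simpa [show a + b - (a + b) / 2 = (a + b) / 2 by ring] using
      ((hg.mono_set hright).comp_sub_left (a + b)).symm
  rw [show a + b - (a + b) / 2 = (a + b) / 2 by ring, add_sub_cancel_left] at hreflect
  calc |simpsonKernelIntegral g a b|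
      ≤ (∫ x in a..(a + b) / 2, |(x - (5 * a + b) / 6) * g x|) +
          ∫ x in (a + b) / 2..b, |(x - (a + 5 * b) / 6) * g x| :=
        (abs_add_le _ _).trans
          (add_le_add (abs_integral_le_integral_abs ham) (abs_integral_le_integral_abs hmb))
    _ = ∫ y in a..(a + b) / 2, |y - (5 * a + b) / 6| * (|g y| + |g (a + b - y)|) := by
        rw [← hreflect, ← integral_add
          (((hg.mono_set hleft).continuousOn_mul (by fun_prop)).abs)
          ((hg_reflect.continuousOn_mul (by fun_prop)).abs)]
        refine integral_congr fun y _ ↦ ?_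
        simp only [abs_mul, show a + b - y - (a + 5 * b) / 6 = -(y - (5 * a + b) / 6) by ring,
          abs_neg]
        ring
    _ ≤ ∫ y in a..(a + b) / 2, |y - (5 * a + b) / 6| * (2 * M) := by
        refine integral_mono_on ham ?_ ?_ fun y hy ↦
          mul_le_mul_of_nonneg_left (hpair y hy) (abs_nonneg _)
        · exact ((hg.mono_set hleft).abs.add hg_reflect.abs).continuousOn_mul (by fun_prop)
        · exact (continuous_abs.comp (continuous_sub_right _)).mul continuous_const
            |>.intervalIntegrable _ _
    _ = 5 * (b - a) ^ 2 / 36 * M := by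
        rw [intervalIntegral.integral_mul_const,
          integral_abs_sub_of_mem_Icc ⟨by linarith, by linarith⟩]
        ring

theorem abs_simpson_error_le {f f' : ℝ → ℝ} {a b M : ℝ} (hab : a < b)
    (hderiv : ∀ x ∈ Icc a b, HasDerivAt f (f' x) x) (hint : IntervalIntegrable f' volume a b)
    (hpair : ∀ y ∈ Icc a ((a + b) / 2), |f' y| + |f' (a + b - y)| ≤ 2 * M) :
    |(1 / (b - a)) * ∫ x in a..b, (f x - (1 / 3) * ((f a + f b) / 2 + 2 * f ((a + b) / 2)))|
      ≤ 5 * (b - a) / 36 * M := by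
  have hba : 0 < b - a := sub_pos.2 hab
  have hf : IntervalIntegrable f volume a b :=
    (HasDerivAt.continuousOn hderiv).intervalIntegrable_of_Icc hab.le
  have herror :
      (1 / (b - a)) * ∫ x in a..b, (f x - (1 / 3) * ((f a + f b) / 2 + 2 * f ((a + b) / 2)))
        = -simpsonKernelIntegral f' a b / (b - a) := by
    rw [integral_sub hf intervalIntegrable_const, intervalIntegral.integral_const, smul_eq_mul,
      simpsonKernelIntegral_deriv_eq hab.le hderiv hint, eq_div_iff hba.ne']
    field_simp
    ring
  rw [herror, abs_div, abs_neg, abs_of_pos hba, div_le_iff₀ hba]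
  calc |simpsonKernelIntegral f' a b| ≤ 5 * (b - a) ^ 2 / 36 * M :=
        abs_simpsonKernelIntegral_le hab.le hint hpair
    _ = 5 * (b - a) / 36 * M * (b - a) := by ring

theorem one_le_rpow_one_add_two_rpow_div {p : ℝ} (hp : 0 ≤ p) :
    1 ≤ ((1 + 2 ^ (p + 1)) / (p + 1)) ^ (1 / p) := by
  have hbernoulli : 1 + (p + 1) * 1 ≤ (1 + 1 : ℝ) ^ (p + 1) :=
    one_add_mul_self_le_rpow_one_add (by norm_num) (by linarith)
  refine Real.one_le_rpow ?_ (by positivity)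
  rw [le_div_iff₀ (by linarith)]
  norm_num at hbernoulli
  linarith

theorem simpson_concave_general
    (I : Set ℝ) (hIc : I.OrdConnected)
    (f f' : ℝ → ℝ) (a b : ℝ)
    (ha : a ∈ interior I) (hb : b ∈ interior I) (hab : a < b)
    (p : ℝ) (hp : 1 < p)
    (hderiv : ∀ x ∈ interior I, HasDerivAt f (f' x) x)
    (hfint : IntervalIntegrable f' volume a b)
    (hconc : ∀ x ∈ I, ∀ y ∈ I, ∀ t ∈ Set.Icc (0:ℝ) 1,
      t * |f' x| + (1-t) * |f' y| ≤ |f' (t*x + (1-t)*y)|) :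
    |(1/(b-a)) * ∫ x in a..b, f x
        - (1/3) * ((f a + f b)/2 + 2 * f ((a+b)/2))|
      ≤ ((b-a)/6) * ((1 + 2^(p+1))/(p+1))^(1/p) * |f' ((a+b)/2)| := by
  have hIcc : Icc a b ⊆ interior I := hIc.interior.out ha hb
  have hpair :
      ∀ y ∈ Icc a ((a + b) / 2), |f' y| + |f' (a + b - y)| ≤ 2 * |f' ((a + b) / 2)| := by
    rintro y ⟨hay, hym⟩
    have hmid := hconc y (interior_subset (hIcc ⟨hay, by linarith⟩)) (a + b - y)
      (interior_subset (hIcc ⟨by linarith, by linarith⟩)) (1 / 2) ⟨by norm_num, by norm_num⟩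
    rw [show 1 / 2 * y + (1 - 1 / 2) * (a + b - y) = (a + b) / 2 by ring] at hmid
    linarith
  have hconst : 5 * (b - a) / 36 ≤ (b - a) / 6 * ((1 + 2 ^ (p + 1)) / (p + 1)) ^ (1 / p) := by
    nlinarith [one_le_rpow_one_add_two_rpow_div (p := p) (by linarith)]
  calc _ ≤ 5 * (b - a) / 36 * |f' ((a + b) / 2)| :=
        abs_simpson_error_le hab (fun x hx ↦ hderiv x (hIcc hx)) hfint hpair
    _ ≤ _ := mul_le_mul_of_nonneg_right hconst (abs_nonneg _)

/-- Simpson-type inequality for functions whose derivative has concave absolute value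
(the case `h(t) = t` of the `h`-concave result). -/
theorem simpson_concave
    (I : Set ℝ) (hI : I ⊆ Set.Ici (0:ℝ)) (hIc : I.OrdConnected)
    (f f' : ℝ → ℝ) (a b : ℝ)
    (ha : a ∈ interior I) (hb : b ∈ interior I) (hab : a < b)
    (p q : ℝ) (hp : 1 < p) (hq : 1 < q) (hpq : 1/p + 1/q = 1)
    (hderiv : ∀ x ∈ interior I, HasDerivAt f (f' x) x)
    (hfint : IntervalIntegrable f' volume a b)
    (hconc : ∀ x ∈ I, ∀ y ∈ I, ∀ t ∈ Set.Icc (0:ℝ) 1,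
      t * |f' x| + (1-t) * |f' y| ≤ |f' (t*x + (1-t)*y)|) :
    |(1/(b-a)) * ∫ x in a..b, f x
        - (1/3) * ((f a + f b)/2 + 2 * f ((a+b)/2))|
      ≤ ((b-a)/6) * ((1 + 2^(p+1))/(p+1))^(1/p) * |f' ((a+b)/2)| :=
  simpson_concave_general I hIc f f' a b ha hb hab p hp hderiv hfint hconc
end
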